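/- Let $H_k$ and $H_\ell$ be reproducing kernel Hilbert spaces on a set $X$ with kernels $k$ and $\ell$. If the pointwise difference $k - \ell$ is a positive semi-definite kernel, then $H_\ell \subseteq H_k$ as sets and the inclusion map $H_\ell \to H_k$ is a contraction (i.e., $\|f\|_{H_k} \leq \|f\|_{H_\ell}$ for all $f \in H_\ell$). -/

import Mathlib

/-! For `g ∈ H_ℓ`, the Gram identity
`‖∑ cᵢ k_{xᵢ}‖² - ‖∑ cᵢ ℓ_{xᵢ}‖² = ∑ c̄ₐ c_b (k - ℓ)(x_a, x_b) ≥ 0`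
shows that `∑ cᵢ k_{xᵢ} ↦ ⟪g, ∑ cᵢ ℓ_{xᵢ}⟫` is a well-defined functional of norm at most `‖g‖`
on the span of the kernel vectors of `H_k`. Extending it by Hahn–Banach and representing it by
Riesz gives `f ∈ H_k` with `‖f‖ ≤ ‖g‖` and `f x = ⟪k_x, f⟫ = ⟪ℓ_x, g⟫ = g x`. -/

open scoped ComplexConjugate ComplexInnerProductSpace BigOperators

/-- A scalar positive semi-definite kernel on a set `X`. -/
def IsPSDKernel {X : Type*} (k : X → X → ℂ) : Prop :=
  ∀ (n : ℕ) (x : Fin n → X) (c : Fin n → ℂ),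
    0 ≤ (∑ a : Fin n, ∑ b : Fin n, conj (c a) * c b * k (x a) (x b)).re ∧
    (∑ a : Fin n, ∑ b : Fin n, conj (c a) * c b * k (x a) (x b)).im = 0

theorem IsPSDKernel.re_sum_nonneg {X : Type*} {K : X → X → ℂ} (hK : IsPSDKernel K)
    (s : Finset X) (c : X → ℂ) :
    0 ≤ (∑ a ∈ s, ∑ b ∈ s, conj (c a) * c b * K a b).re := by
  have h := (hK s.card (fun i => s.equivFin.symm i) (fun i => c (s.equivFin.symm i))).1
  simp_rw [← Finset.sum_coe_sort s, ← s.equivFin.symm.sum_comp]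
  exact h

theorem norm_sum_smul_sq {𝕜 ι H : Type*} [RCLike 𝕜] [NormedAddCommGroup H]
    [InnerProductSpace 𝕜 H] (φ : ι → H) (s : Finset ι) (c : ι → 𝕜) :
    ‖∑ i ∈ s, c i • φ i‖ ^ 2
      = RCLike.re (∑ a ∈ s, ∑ b ∈ s, conj (c a) * c b * inner 𝕜 (φ a) (φ b)) := by
  rw [← inner_self_eq_norm_sq (𝕜 := 𝕜), sum_inner]
  simp_rw [inner_sum, inner_smul_left, inner_smul_right, mul_assoc]

theorem norm_sum_smul_le_of_isPSDKernel {X H₁ H₂ : Type*}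
    [NormedAddCommGroup H₁] [InnerProductSpace ℂ H₁] [NormedAddCommGroup H₂] [InnerProductSpace ℂ H₂]
    {φ : X → H₁} {ψ : X → H₂} (h : IsPSDKernel fun z w => ⟪φ z, φ w⟫ - ⟪ψ z, ψ w⟫)
    (s : Finset X) (c : X → ℂ) :
    ‖∑ i ∈ s, c i • ψ i‖ ≤ ‖∑ i ∈ s, c i • φ i‖ := by
  rw [← pow_le_pow_iff_left₀ (norm_nonneg _) (norm_nonneg _) two_ne_zero,
    norm_sum_smul_sq, norm_sum_smul_sq, ← sub_nonneg, ← map_sub]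
  simpa only [mul_sub, Finset.sum_sub_distrib, RCLike.re_to_complex] using h.re_sum_nonneg s c

theorem exists_strongDual_apply_eq_of_norm_sum_le {𝕜 E ι : Type*} [RCLike 𝕜]
    [NormedAddCommGroup E] [NormedSpace 𝕜 E] (u : ι → E) (v : ι → 𝕜) {C : ℝ} (hC : 0 ≤ C)
    (h : ∀ (s : Finset ι) (c : ι → 𝕜), ‖∑ i ∈ s, c i * v i‖ ≤ C * ‖∑ i ∈ s, c i • u i‖) :
    ∃ φ : StrongDual 𝕜 E, ‖φ‖ ≤ C ∧ ∀ i, φ (u i) = v i := by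
  set S := Finsupp.linearCombination 𝕜 u
  set R := Finsupp.linearCombination 𝕜 v
  have hRS : ∀ c, ‖R c‖ ≤ C * ‖S c‖ := fun c => by
    simpa [S, R, Finsupp.linearCombination_apply, Finsupp.sum] using h c.support c
  have hker : LinearMap.ker S ≤ LinearMap.ker R := fun c hc => by
    simpa [LinearMap.mem_ker.mp hc] using hRS c
  let G : LinearMap.range S →ₗ[𝕜] 𝕜 :=
    (LinearMap.ker S).liftQ R hker ∘ₗ S.quotKerEquivRange.symm.toLinearMap
  have hG : ∀ c, G ⟨S c, LinearMap.mem_range_self S c⟩ = R c := fun c => by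
    rw [LinearMap.comp_apply, LinearEquiv.coe_coe, S.quotKerEquivRange_symm_apply_image c,
      Submodule.mkQ_apply, Submodule.liftQ_apply]
  have hGC : ∀ y, ‖G y‖ ≤ C * ‖y‖ := by
    rintro ⟨_, c, rfl⟩
    exact (hG c).symm ▸ hRS c
  obtain ⟨φ, hφ, hnorm⟩ := exists_extension_norm_eq _ (G.mkContinuous C hGC)
  refine ⟨φ, hnorm ▸ LinearMap.mkContinuous_norm_le G hC hGC, fun i => ?_⟩
  have hi := hφ ⟨S (Finsupp.single i 1), LinearMap.mem_range_self S _⟩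
  rw [LinearMap.mkContinuous_apply, hG] at hi
  simpa [S, R] using hi

theorem rkhs_inclusion_of_difference_psd_general {X : Type*}
    {Hk : Type*} [NormedAddCommGroup Hk] [InnerProductSpace ℂ Hk] [CompleteSpace Hk]
    {Hl : Type*} [NormedAddCommGroup Hl] [InnerProductSpace ℂ Hl]
    (vk : Hk →ₗ[ℂ] (X → ℂ))
    (kfun : X → Hk) (hrepk : ∀ (f : Hk) (x : X), ⟪kfun x, f⟫ = vk f x)
    (vl : Hl →ₗ[ℂ] (X → ℂ))
    (lfun : X → Hl) (hrepl : ∀ (g : Hl) (x : X), ⟪lfun x, g⟫ = vl g x)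
    (k l : X → X → ℂ) (hk : ∀ z w, k z w = vk (kfun w) z)
    (hl : ∀ z w, l z w = vl (lfun w) z)
    (hdiff : IsPSDKernel (fun z w => k z w - l z w)) :
    ∀ g : Hl, ∃ f : Hk, vk f = vl g ∧ ‖f‖ ≤ ‖g‖ := by
  have hgram : IsPSDKernel fun z w => ⟪kfun z, kfun w⟫ - ⟪lfun z, lfun w⟫ := by
    convert hdiff using 3 with z w
    rw [hrepk, hrepl, hk, hl]
  intro g
  obtain ⟨φ, hφ, hφk⟩ := exists_strongDual_apply_eq_of_norm_sum_le kfun (fun x => ⟪g, lfun x⟫)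
    (norm_nonneg g) fun s c => calc
      ‖∑ i ∈ s, c i * ⟪g, lfun i⟫‖ = ‖⟪g, ∑ i ∈ s, c i • lfun i⟫‖ := by
        simp only [inner_sum, inner_smul_right]
      _ ≤ ‖g‖ * ‖∑ i ∈ s, c i • lfun i‖ := norm_inner_le_norm _ _
      _ ≤ ‖g‖ * ‖∑ i ∈ s, c i • kfun i‖ := by
        gcongr; exact norm_sum_smul_le_of_isPSDKernel hgram s c
  refine ⟨(InnerProductSpace.toDual ℂ Hk).symm φ, funext fun x => ?_, by simpa using hφ⟩
  rw [← hrepk, ← inner_conj_symm, InnerProductSpace.toDual_symm_apply, hφk, inner_conj_symm,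
    hrepl]

/-- Aronszajn's inclusion theorem: if `k - ℓ` is positive semi-definite, then
`H_ℓ ⊆ H_k` as sets of functions, and the inclusion is a contraction.  Both
RKHSs are modelled as Hilbert spaces with injective linear realizations as
functions and kernel vectors satisfying the reproducing property. -/
theorem rkhs_inclusion_of_difference_psd {X : Type*}
    {Hk : Type*} [NormedAddCommGroup Hk] [InnerProductSpace ℂ Hk] [CompleteSpace Hk]
    {Hl : Type*} [NormedAddCommGroup Hl] [InnerProductSpace ℂ Hl] [CompleteSpace Hl]
    (vk : Hk →ₗ[ℂ] (X → ℂ)) (hvk : Function.Injective vk)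
    (kfun : X → Hk) (hrepk : ∀ (f : Hk) (x : X), ⟪kfun x, f⟫ = vk f x)
    (vl : Hl →ₗ[ℂ] (X → ℂ)) (hvl : Function.Injective vl)
    (lfun : X → Hl) (hrepl : ∀ (g : Hl) (x : X), ⟪lfun x, g⟫ = vl g x)
    (k l : X → X → ℂ) (hk : ∀ z w, k z w = vk (kfun w) z)
    (hl : ∀ z w, l z w = vl (lfun w) z)
    (hdiff : IsPSDKernel (fun z w => k z w - l z w)) :
    ∀ g : Hl, ∃ f : Hk, vk f = vl g ∧ ‖f‖ ≤ ‖g‖ :=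
  rkhs_inclusion_of_difference_psd_general vk kfun hrepk vl lfun hrepl k l hk hl hdiff
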